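/- Fix β ∈ (0, 1/2). For every ε > 0 there exists N such that for all n ≥ N the following holds. Let S be a finite set with |S| = 2b for some positive integer b with 2b ≤ n, and let K ⊆ S with |K| ≥ n^{1−β}/2 and |S \ K| ≥ n/3. Then the number of subsets A ⊆ S with |A| = b and | |A ∩ K| − |K \ A| | ≤ n^{1/2−β} is at most ε·C(2b, b), where C(2b, b) is the binomial coefficient. Equivalently, for a uniformly random subset A of S of size b, the probability that | |A ∩ K| − |K \ A| | ≤ n^{1/2−β} is at most ε. -/

import Mathlib

open Finset Filter

/-! With `k = |K|` and `m = |S \ K|`, the `b`-subsets `A` with `|A ∩ K| = j` number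
`C(k, j) C(m, b - j) ≤ C(k, ⌊k/2⌋) C(m, ⌊m/2⌋)`, and the balance condition `|2j - k| ≤ r` leaves at
most `r + 1` values of `j`. The central binomial estimates `k C(k, ⌊k/2⌋)² ≤ 4^k` and
`16^b ≤ 4b C(2b, b)²` then give `count² · km ≤ 4b (r + 1)² C(2b, b)²`. For `r = n^(1/2-β)`,
`b ≤ n/2` and `km ≥ n^(2-β)/6` the factor `4b (r + 1)² / (km)` is `O(n^(-β))`. -/

theorem Finset.card_filter_card_inter_eq_le {α : Type*} [DecidableEq α] (s K : Finset α)
    (b j : ℕ) :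
    #{A ∈ s.powersetCard b | #(A ∩ K) = j} ≤ (#K).choose j * (#(s \ K)).choose (b - j) := by
  rw [← card_powersetCard, ← card_powersetCard, ← card_product]
  refine card_le_card_of_injOn (fun A => (A ∩ K, A \ K)) ?_ ?_
  · intro A hA
    simp only [coe_filter, mem_powersetCard, Set.mem_ofPred_eq] at hA
    obtain ⟨⟨hAs, hAb⟩, hj⟩ := hA
    have hsplit := card_inter_add_card_sdiff A K
    simp only [coe_product, Set.mem_prod, mem_coe, mem_powersetCard]
    exact ⟨⟨inter_subset_right, hj⟩, sdiff_subset_sdiff hAs le_rfl, by omega⟩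
  · intro A₁ _ A₂ _ h
    simp only [Prod.mk.injEq] at h
    rw [← sdiff_union_inter A₁ K, ← sdiff_union_inter A₂ K, h.1, h.2]

theorem Finset.card_le_two_mul_add_one_of_forall_abs_sub_le (J : Finset ℕ) {c r : ℝ}
    (hr : 0 ≤ r) (hJ : ∀ j ∈ J, |(j : ℝ) - c| ≤ r) : (#J : ℝ) ≤ 2 * r + 1 := by
  rcases J.eq_empty_or_nonempty with rfl | hne
  · simp; linarith
  have hmin := abs_le.1 (hJ _ (J.min'_mem hne))
  have hmax := abs_le.1 (hJ _ (J.max'_mem hne))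
  have hcard : #J ≤ J.max' hne + 1 - J.min' hne := by
    rw [← Nat.card_Icc]
    exact card_le_card fun j hj => mem_Icc.2 ⟨J.min'_le j hj, J.le_max' j hj⟩
  have hle := J.min'_le_max' hne
  calc (#J : ℝ) ≤ ((J.max' hne + 1 - J.min' hne : ℕ) : ℝ) := by exact_mod_cast hcard
    _ ≤ 2 * r + 1 := by rw [Nat.cast_sub (by omega)]; push_cast; linarith

namespace Nat

theorem two_mul_add_one_mul_centralBinom_sq_le (n : ℕ) :
    (2 * n + 1) * centralBinom n ^ 2 ≤ 16 ^ n := by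
  induction n with
  | zero => simp
  | succ n ih =>
    refine Nat.le_of_mul_le_mul_left ?_ (show 0 < (n + 1) ^ 2 by positivity)
    calc (n + 1) ^ 2 * ((2 * (n + 1) + 1) * centralBinom (n + 1) ^ 2)
        = (2 * n + 3) * ((n + 1) * centralBinom (n + 1)) ^ 2 := by ring
      _ = (2 * n + 3) * (2 * n + 1) * 4 * ((2 * n + 1) * centralBinom n ^ 2) := by
          rw [succ_mul_centralBinom_succ]; ring
      _ ≤ 4 * (n + 1) ^ 2 * 4 * 16 ^ n :=
          Nat.mul_le_mul (Nat.mul_le_mul_right _ (by nlinarith)) ih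
      _ = (n + 1) ^ 2 * 16 ^ (n + 1) := by ring

theorem sixteen_pow_le_four_mul_mul_centralBinom_sq {n : ℕ} (hn : 0 < n) :
    16 ^ n ≤ 4 * n * centralBinom n ^ 2 := by
  induction n with
  | zero => omega
  | succ n ih =>
    rcases Nat.eq_zero_or_pos n with rfl | hn
    · simp [centralBinom]
    refine Nat.le_of_mul_le_mul_left ?_ (show 0 < n + 1 by omega)
    calc (n + 1) * 16 ^ (n + 1) = 16 * (n + 1) * 16 ^ n := by ring
      _ ≤ 16 * (n + 1) * (4 * n * centralBinom n ^ 2) := by gcongr; exact ih hn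
      _ ≤ 16 * (2 * n + 1) ^ 2 * centralBinom n ^ 2 := by
          rw [← mul_assoc]; exact Nat.mul_le_mul_right _ (by nlinarith)
      _ = 4 * ((n + 1) * centralBinom (n + 1)) ^ 2 := by
          rw [succ_mul_centralBinom_succ]; ring
      _ = (n + 1) * (4 * (n + 1) * centralBinom (n + 1) ^ 2) := by ring

theorem mul_choose_half_sq_le (k : ℕ) : k * k.choose (k / 2) ^ 2 ≤ 4 ^ k := by
  obtain ⟨t, rfl | rfl⟩ := k.even_or_odd'
  · rw [Nat.mul_div_cancel_left t two_pos, ← centralBinom_eq_two_mul_choose, pow_mul]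
    calc 2 * t * centralBinom t ^ 2 ≤ (2 * t + 1) * centralBinom t ^ 2 := by gcongr; omega
      _ ≤ 16 ^ t := two_mul_add_one_mul_centralBinom_sq_le t
  · have hhalf : (2 * t + 1) / 2 = t := by omega
    have hcentral : centralBinom (t + 1) = 2 * (2 * t + 1).choose t := by
      rw [centralBinom_eq_two_mul_choose, show 2 * (t + 1) = 2 * t + 1 + 1 by ring,
        choose_succ_succ, ← choose_symm_half]
      ring
    rw [hhalf]
    refine Nat.le_of_mul_le_mul_left ?_ (show 0 < 4 by norm_num)
    calc 4 * ((2 * t + 1) * (2 * t + 1).choose t ^ 2)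
        = (2 * t + 1) * centralBinom (t + 1) ^ 2 := by rw [hcentral]; ring
      _ ≤ (2 * (t + 1) + 1) * centralBinom (t + 1) ^ 2 := by gcongr; omega
      _ ≤ 16 ^ (t + 1) := two_mul_add_one_mul_centralBinom_sq_le (t + 1)
      _ = 4 * 4 ^ (2 * t + 1) := by rw [show (16 : ℕ) = 4 ^ 2 by rfl, ← pow_mul]; ring

end Nat

section Balanced

variable {S : Type*} [Fintype S] [DecidableEq S]

noncomputable def balancedHalves (K : Finset S) (b : ℕ) (r : ℝ) : Finset (Finset S) :=
  {A ∈ univ.powersetCard b | |(#(A ∩ K) : ℝ) - #(K \ A)| ≤ r}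

theorem card_balancedHalves_le (K : Finset S) (b : ℕ) {r : ℝ} (hr : 0 ≤ r) :
    (#(balancedHalves K b r) : ℝ) ≤
      (r + 1) * ((#K).choose (#K / 2) * (#(univ \ K)).choose (#(univ \ K) / 2) : ℕ) := by
  set M := (#K).choose (#K / 2) * (#(univ \ K)).choose (#(univ \ K) / 2)
  have hfiber : ∀ j, #{A ∈ balancedHalves K b r | #(A ∩ K) = j} ≤ M := fun j =>
    calc #{A ∈ balancedHalves K b r | #(A ∩ K) = j}
        ≤ #{A ∈ univ.powersetCard b | #(A ∩ K) = j} :=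
          card_le_card (filter_subset_filter _ (filter_subset _ _))
      _ ≤ (#K).choose j * (#(univ \ K)).choose (b - j) := card_filter_card_inter_eq_le _ _ _ _
      _ ≤ M := Nat.mul_le_mul (Nat.choose_le_middle _ _) (Nat.choose_le_middle _ _)
  have hwindow : ∀ j ∈ (balancedHalves K b r).image (fun A => #(A ∩ K)),
      |(j : ℝ) - #K / 2| ≤ r / 2 := by
    simp only [mem_image, balancedHalves, mem_filter]
    rintro _ ⟨A, ⟨-, hA⟩, rfl⟩
    have hsplit : (#(A ∩ K) : ℝ) + #(K \ A) = #K := by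
      rw [inter_comm]; exact_mod_cast card_inter_add_card_sdiff K A
    rw [show (#(A ∩ K) : ℝ) - #K / 2 = (#(A ∩ K) - #(K \ A)) / 2 by linarith, abs_div,
      abs_two]
    linarith
  calc (#(balancedHalves K b r) : ℝ) ≤ ((M * #((balancedHalves K b r).image
          (fun A => #(A ∩ K))) : ℕ) : ℝ) := by
        exact_mod_cast card_le_mul_card_image _ M fun j _ => hfiber j
    _ ≤ (r + 1) * M := by
        rw [Nat.cast_mul, mul_comm]
        gcongr
        linarith [card_le_two_mul_add_one_of_forall_abs_sub_le _ (by linarith) hwindow]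

theorem card_balancedHalves_sq_mul_le (K : Finset S) {b : ℕ} (hb : 0 < b)
    (hS : Fintype.card S = 2 * b) {r : ℝ} (hr : 0 ≤ r) :
    (#(balancedHalves K b r) : ℝ) ^ 2 * (#K * #(univ \ K)) ≤
      (r + 1) ^ 2 * (4 * b * ((2 * b).choose b) ^ 2 : ℕ) := by
  set k := #K
  set m := #(univ \ K)
  have hkm : k + m = 2 * b := by
    rw [← hS, ← card_univ, add_comm]; exact card_sdiff_add_card_eq_card (subset_univ K)
  have hbinom : (k * k.choose (k / 2) ^ 2) * (m * m.choose (m / 2) ^ 2) ≤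
      4 * b * ((2 * b).choose b) ^ 2 :=
    calc (k * k.choose (k / 2) ^ 2) * (m * m.choose (m / 2) ^ 2) ≤ 4 ^ k * 4 ^ m :=
          Nat.mul_le_mul (Nat.mul_choose_half_sq_le k) (Nat.mul_choose_half_sq_le m)
      _ = 16 ^ b := by rw [← pow_add, hkm, pow_mul]; rfl
      _ ≤ 4 * b * ((2 * b).choose b) ^ 2 := Nat.sixteen_pow_le_four_mul_mul_centralBinom_sq hb
  have hcard := card_balancedHalves_le K b hr
  calc (#(balancedHalves K b r) : ℝ) ^ 2 * (k * m)
      ≤ ((r + 1) * (k.choose (k / 2) * m.choose (m / 2) : ℕ)) ^ 2 * (k * m) := by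
        gcongr
    _ = (r + 1) ^ 2 * ((k * k.choose (k / 2) ^ 2) * (m * m.choose (m / 2) ^ 2) : ℕ) := by
        push_cast; ring
    _ ≤ (r + 1) ^ 2 * (4 * b * ((2 * b).choose b) ^ 2 : ℕ) := by gcongr

theorem card_balancedHalves_le_mul_choose (K : Finset S) {b : ℕ} (hb : 0 < b)
    (hS : Fintype.card S = 2 * b) {r ε : ℝ} (hr : 0 ≤ r) (hε : 0 ≤ ε)
    (hK : 0 < #K) (hKc : 0 < #(univ \ K))
    (hsmall : (r + 1) ^ 2 * (4 * b) ≤ ε ^ 2 * (#K * #(univ \ K))) :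
    (#(balancedHalves K b r) : ℝ) ≤ ε * (2 * b).choose b := by
  have hkm : (0 : ℝ) < #K * #(univ \ K) := by positivity
  have hsq := card_balancedHalves_sq_mul_le K hb hS hr
  push_cast at hsq
  rw [← pow_le_pow_iff_left₀ (by positivity) (by positivity) two_ne_zero]
  refine le_of_mul_le_mul_right ?_ hkm
  calc (#(balancedHalves K b r) : ℝ) ^ 2 * (#K * #(univ \ K))
      ≤ (r + 1) ^ 2 * (4 * b) * ((2 * b).choose b) ^ 2 := by linarith
    _ ≤ ε ^ 2 * (#K * #(univ \ K)) * ((2 * b).choose b) ^ 2 := by gcongr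
    _ = (ε * (2 * b).choose b) ^ 2 * (#K * #(univ \ K)) := by ring

end Balanced

theorem rpow_add_one_sq_mul_le {x β ε b k m : ℝ} (hx : 1 ≤ x) (hβ : β < 1 / 2)
    (hlarge : 48 ≤ ε ^ 2 * x ^ β) (hb : 0 ≤ b) (h2b : 2 * b ≤ x)
    (hk : x ^ (1 - β) / 2 ≤ k) (hm : x / 3 ≤ m) :
    (x ^ (1 / 2 - β) + 1) ^ 2 * (4 * b) ≤ ε ^ 2 * (k * m) := by
  have hx0 : 0 < x := by linarith
  set r := x ^ (1 / 2 - β)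
  have hr : 1 ≤ r := Real.one_le_rpow hx (by linarith)
  have hr2 : r ^ 2 = x ^ (1 - 2 * β) := by
    rw [← Real.rpow_natCast, ← Real.rpow_mul hx0.le]; norm_num; ring_nf
  have hsplit : x ^ (1 - β) = x ^ β * x ^ (1 - 2 * β) := by
    rw [← Real.rpow_add hx0]; ring_nf
  have hk0 : 0 ≤ x ^ (1 - β) / 2 := by positivity
  calc (r + 1) ^ 2 * (4 * b) ≤ (2 * r) ^ 2 * (2 * x) :=
        mul_le_mul (by gcongr; linarith) (by linarith) (by positivity) (by positivity)
    _ = 48 * x ^ (1 - 2 * β) * x / 6 := by rw [mul_pow, hr2]; ring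
    _ ≤ ε ^ 2 * x ^ β * x ^ (1 - 2 * β) * x / 6 := by gcongr
    _ = ε ^ 2 * (x ^ (1 - β) / 2 * (x / 3)) := by rw [hsplit]; ring
    _ ≤ ε ^ 2 * (k * m) := by gcongr; linarith

/-- Fix `β ∈ (0, 1/2)`.  For every `ε > 0` there is `N` such that for all
`n ≥ N`: if `|S| = 2b` with `0 < b`, `2b ≤ n`, and `K ⊆ S` with `|K| ≥ n^(1-β)/2` and
`|S \ K| ≥ n/3`, then the number of subsets `A ⊆ S` with `|A| = b` and
`||A ∩ K| - |K \ A|| ≤ n^(1/2-β)` is at most `ε · C(2b, b)`. -/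
theorem statement2 (β : ℝ) (hβ0 : 0 < β) (hβ1 : β < 1 / 2) :
    ∀ ε : ℝ, 0 < ε → ∃ N : ℕ, ∀ n : ℕ, N ≤ n →
      ∀ (S : Type) [Fintype S] [DecidableEq S], ∀ b : ℕ, 0 < b →
        Fintype.card S = 2 * b → 2 * b ≤ n →
          ∀ K : Finset S, (n : ℝ) ^ (1 - β) / 2 ≤ (K.card : ℝ) →
            (n : ℝ) / 3 ≤ (((Finset.univ : Finset S) \ K).card : ℝ) →
            (((Finset.univ.powersetCard b).filter
                (fun A : Finset S =>
                  |((A ∩ K).card : ℝ) - ((K \ A).card : ℝ)| ≤ (n : ℝ) ^ ((1 : ℝ) / 2 - β))).card : ℝ)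
              ≤ ε * ((2 * b).choose b) := by
  intro ε hε
  have hlarge : ∀ᶠ n : ℕ in atTop, 48 / ε ^ 2 ≤ (n : ℝ) ^ β ∧ 1 ≤ n :=
    (((tendsto_rpow_atTop hβ0).comp tendsto_natCast_atTop_atTop).eventually_ge_atTop _).and
      (eventually_ge_atTop 1)
  obtain ⟨N, hN⟩ := eventually_atTop.1 hlarge
  refine ⟨N, fun n hn S _ _ b hb hS h2b K hK hKc => ?_⟩
  obtain ⟨hnβ, hn1⟩ := hN n hn
  have hn1 : (1 : ℝ) ≤ n := by exact_mod_cast hn1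
  have hkpos : (0 : ℝ) < #K := lt_of_lt_of_le (by positivity) hK
  have hKcpos : (0 : ℝ) < #(univ \ K) := lt_of_lt_of_le (by positivity) hKc
  refine card_balancedHalves_le_mul_choose K hb hS (by positivity) hε.le
    (by exact_mod_cast hkpos) (by exact_mod_cast hKcpos) ?_
  exact rpow_add_one_sq_mul_le hn1 hβ1 ((div_le_iff₀' (by positivity)).1 hnβ) (by positivity)
    (by exact_mod_cast h2b) hK hKc
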